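/- The map I ↦ I ∩ W is a bijection from the set of ideals I of R such that the quotient R/I is a finite ring of odd cardinality onto the set of ideals J of W such that W/J is a finite ring of odd cardinality, with inverse J ↦ J·R (the ideal of R generated by J). Moreover, for every such ideal I of R, the natural ring homomorphism W/(I ∩ W) → R/I induced by the inclusion W ⊆ R is an isomorphism. -/

import Mathlib

/-! The order `W` contains `2R`. If an ideal `I` of `R` contains an odd integer `m`, then writing
`1 = 2u + mv` gives `R = W + I`, hence `W/(I ∩ W) ≅ R/I` and `(I ∩ W)R = I`. If an ideal `J` of
`W` contains an odd `m`, then `2·(JR) ⊆ J` and `mW ⊆ J` give `JR ∩ W = J`. Finally, a finite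
quotient ring is killed by its cardinality, so quotients of odd cardinality come from ideals
containing an odd integer. -/

abbrev Rng : Type := ℤ × Zsqrtd 2 × Zsqrtd 3

def Wset : Set Rng :=
  {p | p.1 ≡ p.2.1.re [ZMOD 2] ∧ p.1 ≡ p.2.2.re + p.2.2.im [ZMOD 2] ∧
       p.2.1.im ≡ p.2.2.im [ZMOD 2]}

private lemma modeq_iff (a b : ℤ) : a ≡ b [ZMOD 2] ↔ ((a : ZMod 2) = b) :=
  (ZMod.intCast_eq_intCast_iff a b 2).symm

def W : Subring Rng where
  carrier := Wset
  zero_mem' := by refine ⟨?_, ?_, ?_⟩ <;> decide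
  one_mem' := by refine ⟨?_, ?_, ?_⟩ <;> decide
  add_mem' := by
    rintro a b ⟨h1, h2, h3⟩ ⟨g1, g2, g3⟩
    refine ⟨h1.add g1, ?_, h3.add g3⟩
    simpa [add_add_add_comm] using h2.add g2
  neg_mem' := by
    rintro a ⟨h1, h2, h3⟩
    refine ⟨h1.neg, ?_, h3.neg⟩
    have := h2.neg
    simp only [Wset, Set.mem_setOf_eq, Prod.fst_neg, Prod.snd_neg, Zsqrtd.re_neg,
      Zsqrtd.im_neg, Int.modEq_iff_dvd] at this ⊢
    omega
  mul_mem' := by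
    rintro a b ⟨h1, h2, h3⟩ ⟨g1, g2, g3⟩
    simp only [Wset, Set.mem_setOf_eq, Prod.fst_mul, Prod.snd_mul, Zsqrtd.re_mul,
      Zsqrtd.im_mul, modeq_iff] at h1 h2 h3 g1 g2 g3 ⊢
    push_cast at h1 h2 h3 g1 g2 g3 ⊢
    have h0 : (2 : ZMod 2) = 0 := rfl
    refine ⟨?_, ?_, ?_⟩
    · rw [← h1, ← g1, h0]; ring
    · linear_combination (b.1 : ZMod 2) * h2 + ((a.2.2.re : ZMod 2) + a.2.2.im) * g2 -
        ((a.2.2.im : ZMod 2) * b.2.2.im) * h0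
    · linear_combination (b.2.1.im : ZMod 2) * h2 - (b.2.1.im : ZMod 2) * h1
        + (b.2.1.re : ZMod 2) * h3 + ((a.2.2.re : ZMod 2) + a.2.2.im) * g3
        + (a.2.2.im : ZMod 2) * g2 - (a.2.2.im : ZMod 2) * g1
        + ((a.2.2.im : ZMod 2) * b.2.2.im) * h0

lemma mem_W_iff (x : Rng) : x ∈ W ↔ x ∈ Wset := Iff.rfl

/-- The ideals of `R` with finite quotient of odd cardinality. -/
def SR : Set (Ideal Rng) := {I | Finite (Rng ⧸ I) ∧ Odd (Nat.card (Rng ⧸ I))}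

/-- The ideals of `W` with finite quotient of odd cardinality. -/
def SW : Set (Ideal W) := {J | Finite (W ⧸ J) ∧ Odd (Nat.card (W ⧸ J))}

lemma natCast_card_quotient_mem {A : Type*} [CommRing A] (I : Ideal A) [Finite (A ⧸ I)] :
    (Nat.card (A ⧸ I) : A) ∈ I := by
  rw [← Ideal.Quotient.eq_zero_iff_mem, map_natCast, ← nsmul_one]
  exact card_nsmul_eq_zero'

namespace Subring

variable {A : Type*} [CommRing A] {S : Subring A} {c m : ℤ}

theorem map_comap_subtype_eq (hc : ∀ a : A, (c : A) * a ∈ S) (hcm : IsCoprime c m)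
    {I : Ideal A} (hmI : (m : A) ∈ I) : (I.comap S.subtype).map S.subtype = I := by
  refine le_antisymm Ideal.map_comap_le fun x hx => ?_
  obtain ⟨u, v, huv⟩ := hcm.map (Int.castRingHom A)
  simp only [eq_intCast] at huv
  have hcx : (c : A) * x ∈ (I.comap S.subtype).map S.subtype :=
    Ideal.mem_map_of_mem S.subtype (x := ⟨_, hc x⟩) (I.mul_mem_left _ hx)
  have hm : (m : A) ∈ (I.comap S.subtype).map S.subtype := by
    simpa using Ideal.mem_map_of_mem S.subtype (x := (m : S)) (by simpa using hmI)
  have hx' : x = u * ((c : A) * x) + v * x * m := by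
    linear_combination (-x) * huv
  rw [hx']
  exact add_mem (Ideal.mul_mem_left _ _ hcx) (Ideal.mul_mem_left _ _ hm)

theorem quotientMap_subtype_bijective (hc : ∀ a : A, (c : A) * a ∈ S) (hcm : IsCoprime c m)
    {I : Ideal A} (hmI : (m : A) ∈ I) :
    Function.Bijective (Ideal.quotientMap I S.subtype le_rfl) := by
  refine ⟨Ideal.quotientMap_injective, fun y => ?_⟩
  obtain ⟨x, rfl⟩ := Ideal.Quotient.mk_surjective y
  obtain ⟨u, v, huv⟩ := hcm.map (Int.castRingHom A)
  simp only [eq_intCast] at huv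
  refine ⟨Ideal.Quotient.mk _ ⟨c * (u * x), hc _⟩, ?_⟩
  rw [Ideal.quotientMap_mk, Ideal.Quotient.eq]
  have hdiff : c * (u * x) - x = -(m * (v * x)) := by
    linear_combination x * huv
  simpa [hdiff] using I.mul_mem_right (v * x) hmI

theorem exists_mem_eq_mul_of_mem_map_subtype (hc : ∀ a : A, (c : A) * a ∈ S) {J : Ideal S}
    {y : A} (hy : y ∈ J.map S.subtype) : ∃ s ∈ J, (s : A) = c * y := by
  -- Quantifying over `a` makes the `smul` step go through: `b • y` is not in `S` in general.
  suffices ∀ a : A, ∃ s ∈ J, (s : A) = c * a * y by simpa using this 1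
  induction hy using Submodule.span_induction with
  | mem x hx =>
    obtain ⟨j, hj, rfl⟩ := hx
    exact fun a => ⟨⟨_, hc a⟩ * j, J.mul_mem_left _ hj, rfl⟩
  | zero => exact fun _ => ⟨0, J.zero_mem, by simp⟩
  | add x y _ _ hx hy =>
    intro a
    obtain ⟨s, hs, hsx⟩ := hx a
    obtain ⟨t, ht, hty⟩ := hy a
    exact ⟨s + t, J.add_mem hs ht, by push_cast [hsx, hty]; ring⟩
  | smul b x _ hx =>
    intro a
    obtain ⟨s, hs, hsx⟩ := hx (a * b)
    exact ⟨s, hs, by rw [hsx, smul_eq_mul]; ring⟩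

theorem comap_map_subtype_eq (hc : ∀ a : A, (c : A) * a ∈ S) (hcm : IsCoprime c m)
    {J : Ideal S} (hmJ : (m : S) ∈ J) : (J.map S.subtype).comap S.subtype = J := by
  refine le_antisymm (fun x hx => ?_) Ideal.le_comap_map
  obtain ⟨s, hs, hsx⟩ := exists_mem_eq_mul_of_mem_map_subtype hc (Ideal.mem_comap.mp hx)
  obtain ⟨u, v, huv⟩ := hcm.map (Int.castRingHom S)
  simp only [eq_intCast] at huv
  have hs' : s = c * x := Subtype.ext (by simpa using hsx)
  have hx' : x = u * s + v * x * m := by linear_combination (-x) * huv - u * hs'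
  rw [hx']
  exact J.add_mem (J.mul_mem_left _ hs) (J.mul_mem_left _ hmJ)

noncomputable def quotientComapSubtypeEquiv (hc : ∀ a : A, (c : A) * a ∈ S) (I : Ideal A)
    [Finite (A ⧸ I)] (hcI : IsCoprime c (Nat.card (A ⧸ I))) : S ⧸ I.comap S.subtype ≃+* A ⧸ I :=
  RingEquiv.ofBijective _ <| quotientMap_subtype_bijective hc hcI <| by
    exact_mod_cast natCast_card_quotient_mem I

noncomputable def quotientMapSubtypeEquiv (hc : ∀ a : A, (c : A) * a ∈ S) (J : Ideal S)
    [Finite (S ⧸ J)] (hcJ : IsCoprime c (Nat.card (S ⧸ J))) : S ⧸ J ≃+* A ⧸ J.map S.subtype :=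
  have hmJ := natCast_card_quotient_mem J
  (Ideal.quotEquivOfEq (comap_map_subtype_eq hc hcJ (by exact_mod_cast hmJ))).symm.trans <|
    RingEquiv.ofBijective _ <| quotientMap_subtype_bijective hc hcJ <| by
      simpa using Ideal.mem_map_of_mem S.subtype hmJ

end Subring

lemma two_mul_mem_W (r : Rng) : ((2 : ℤ) : Rng) * r ∈ W := by
  rw [Int.cast_two, two_mul, mem_W_iff]
  refine ⟨?_, ?_, ?_⟩ <;>
  · simp only [Prod.fst_add, Prod.snd_add, Zsqrtd.re_add, Zsqrtd.im_add, Int.ModEq]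
    omega

lemma isCoprime_two_of_odd {n : ℕ} (hn : Odd n) : IsCoprime (2 : ℤ) n := by
  exact_mod_cast Nat.isCoprime_iff_coprime.mpr (Nat.coprime_two_left.mpr hn)

/-- The map `I ↦ I ∩ W` is a bijection from the set of ideals `I` of `R` with `R/I` a
finite ring of odd cardinality onto the set of ideals of `W` with finite quotient of odd
cardinality, with inverse `J ↦ J·R`; moreover for every such `I` the natural ring
homomorphism `W/(I ∩ W) → R/I` is an isomorphism (i.e. bijective). -/
theorem stmt14 :
    Set.BijOn (fun I : Ideal Rng => Ideal.comap W.subtype I) SR SW ∧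
    (∀ I ∈ SR, Ideal.comap W.subtype I ∈ SW) ∧
    (∀ J ∈ SW, Ideal.map W.subtype J ∈ SR) ∧
    (∀ I ∈ SR, Ideal.map W.subtype (Ideal.comap W.subtype I) = I) ∧
    (∀ J ∈ SW, Ideal.comap W.subtype (Ideal.map W.subtype J) = J) ∧
    (∀ I ∈ SR, Function.Bijective (Ideal.quotientMap I W.subtype le_rfl)) := by
  have hcomap : ∀ I ∈ SR, Ideal.comap W.subtype I ∈ SW := by
    rintro I ⟨_, hodd⟩
    let e := Subring.quotientComapSubtypeEquiv two_mul_mem_W I (isCoprime_two_of_odd hodd)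
    exact ⟨Finite.of_equiv _ e.symm.toEquiv, Nat.card_congr e.toEquiv ▸ hodd⟩
  have hmap : ∀ J ∈ SW, Ideal.map W.subtype J ∈ SR := by
    rintro J ⟨_, hodd⟩
    let e := Subring.quotientMapSubtypeEquiv two_mul_mem_W J (isCoprime_two_of_odd hodd)
    exact ⟨Finite.of_equiv _ e.toEquiv, Nat.card_congr e.toEquiv ▸ hodd⟩
  have hmap_comap : ∀ I ∈ SR, Ideal.map W.subtype (Ideal.comap W.subtype I) = I :=
    fun I ⟨_, hodd⟩ => Subring.map_comap_subtype_eq two_mul_mem_W (isCoprime_two_of_odd hodd)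
      (by exact_mod_cast natCast_card_quotient_mem I)
  have hcomap_map : ∀ J ∈ SW, Ideal.comap W.subtype (Ideal.map W.subtype J) = J :=
    fun J ⟨_, hodd⟩ => Subring.comap_map_subtype_eq two_mul_mem_W (isCoprime_two_of_odd hodd)
      (by exact_mod_cast natCast_card_quotient_mem J)
  refine ⟨Set.InvOn.bijOn ⟨hmap_comap, hcomap_map⟩ hcomap hmap, hcomap, hmap, hmap_comap,
    hcomap_map, fun I ⟨_, hodd⟩ => ?_⟩
  exact Subring.quotientMap_subtype_bijective two_mul_mem_W (isCoprime_two_of_odd hodd)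
    (by exact_mod_cast natCast_card_quotient_mem I)
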